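/- arXiv:2011.00117 — 9 statements merged into one kernel-verified Lean document; each statement's English description precedes it below -/
import Mathlib

section
/- Let m ≥ 1 be an integer and let R_m = ℤ[h][X]/(X^{m+1}). For 1 ≤ i ≤ m+1 set u_i = X^{m+1−i}(h+X)^{i−1} ∈ R_m. Then for all 1 ≤ i, j ≤ m+1 one has u_i · u_j = Σ_{k=1}^{m+1} C(i+j−k−2, m−1) h^m u_k in R_m, where C(p,q) denotes the binomial coefficient with the convention that C(p,q) = 0 whenever p < q or p < 0. (In particular the coefficient of u_k vanishes unless k ≤ i and k ≤ j.) -/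
open Polynomial Finset

private lemma col_choose (a : ℕ) : ∀ N : ℕ, ∑ q ∈ range N, q.choose a = N.choose (a+1) := by
  intro N
  induction N with
  | zero => simp
  | succ N ih =>
    rw [Finset.sum_range_succ, ih]
    have h := Nat.choose_succ_succ N a
    simp only [Nat.succ_eq_add_one] at h
    omega

private lemma core_choose (a : ℕ) : ∀ n b : ℕ,
    ∑ q ∈ range (n+1), q.choose a * (n-q).choose b = (n+1).choose (a+b+1) := by
  intro n
  induction n with
  | zero =>
    intro b
    simp only [zero_add, Finset.sum_range_one, Nat.sub_zero, Nat.zero_sub]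
    rcases Nat.eq_zero_or_pos a with ha | ha
    · subst ha
      rcases Nat.eq_zero_or_pos b with hb | hb
      · subst hb; simp
      · rw [Nat.choose_eq_zero_of_lt hb, mul_zero,
          Nat.choose_eq_zero_of_lt (by omega : 1 < 0+b+1)]
    · rw [Nat.choose_eq_zero_of_lt ha, zero_mul,
        Nat.choose_eq_zero_of_lt (by omega : 1 < a+b+1)]
  | succ n ih =>
    intro b
    cases b with
    | zero =>
      simp only [Nat.choose_zero_right, mul_one, Nat.add_zero]
      exact col_choose a (n+2)
    | succ b =>
      rw [Finset.sum_range_succ, Nat.sub_self,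
        Nat.choose_eq_zero_of_lt (by omega : 0 < b+1), mul_zero, add_zero]
      have step : ∀ q ∈ range (n+1), q.choose a * (n+1-q).choose (b+1)
          = q.choose a * (n-q).choose b + q.choose a * (n-q).choose (b+1) := by
        intro q hq
        have hq' : q ≤ n := by simpa [Nat.lt_succ_iff] using hq
        have h : n+1-q = (n-q)+1 := by omega
        rw [h, Nat.choose_succ_succ, mul_add]
      rw [Finset.sum_congr rfl step, Finset.sum_add_distrib, ih b, ih (b+1)]
      have h2 := Nat.choose_succ_succ (n+1) (a+b+1)
      simp only [Nat.succ_eq_add_one] at h2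
      have e1 : a + (b+1) + 1 = a+b+1+1 := by omega
      rw [e1]
      omega

private lemma key_choose (m s d : ℕ) (hm : 1 ≤ m) (hs : s ≤ 2*m) (hd : d ≤ m) :
    ∑ k ∈ Icc 1 (m+1), (if k ≤ s then (s-k).choose (m-1) else 0) * (k-1).choose d
      = s.choose (m+d) := by
  rw [← Finset.Ico_add_one_right_eq_Icc, Finset.sum_Ico_eq_sum_range]
  have hr : m + 1 + 1 - 1 = m + 1 := by omega
  rw [hr]
  cases s with
  | zero =>
    rw [Nat.choose_eq_zero_of_lt (by omega : 0 < m+d)]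
    apply Finset.sum_eq_zero
    intro q hq
    rw [if_neg (by omega)]
    simp
  | succ n =>
    have hcore := core_choose d n (m-1)
    have hgoal : (n+1).choose (m+d) = (n+1).choose (d+(m-1)+1) := by
      congr 1; omega
    rw [hgoal, ← hcore]
    have hsub : ∑ q ∈ range (m+1),
        (if 1+q ≤ n+1 then (n+1-(1+q)).choose (m-1) else 0) * (1+q-1).choose d
      = ∑ q ∈ range (n+1),
        (if 1+q ≤ n+1 then (n+1-(1+q)).choose (m-1) else 0) * (1+q-1).choose d := by
      rcases le_or_gt n m with h | h
      · refine (Finset.sum_subset (Finset.range_subset_range.mpr (by omega)) ?_).symm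
        intro q hq hq'
        have h1 : n + 1 ≤ q := by
          simp only [Finset.mem_range, Nat.lt_succ_iff, not_lt] at hq'; omega
        rw [if_neg (by omega)]
        simp
      · refine Finset.sum_subset (Finset.range_subset_range.mpr (by omega)) ?_
        intro q hq hq'
        have h1 : m + 1 ≤ q := by
          simp only [Finset.mem_range, Nat.lt_succ_iff, not_lt] at hq'; omega
        have h2 : q ≤ n := by
          simpa [Nat.lt_succ_iff] using hq
        rw [if_pos (by omega), Nat.choose_eq_zero_of_lt (by omega : n+1-(1+q) < m-1),
          zero_mul]
    rw [hsub]
    apply Finset.sum_congr rfl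
    intro q hq
    have hq' : q ≤ n := by simpa [Nat.lt_succ_iff] using hq
    rw [if_pos (by omega)]
    have e1 : n+1-(1+q) = n - q := by omega
    have e2 : 1+q-1 = q := by omega
    rw [e1, e2, mul_comm]

private lemma quot_main (m : ℕ) (hm : 1 ≤ m) (s : ℕ) (hs : s ≤ 2*m)
    {Q : Type*} [CommRing Q] (x H : Q) (hx : x ^ (m+1) = 0) :
    x ^ (2*m - s) * (H + x) ^ s
      = ∑ k ∈ Icc 1 (m+1),
          (if k ≤ s then (s-k).choose (m-1) else 0) •
            (H ^ m * (x ^ (m+1-k) * (H + x) ^ (k-1))) := by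
  have hxn : ∀ n, m+1 ≤ n → x ^ n = 0 := by
    intro n hn
    obtain ⟨c, rfl⟩ := Nat.exists_eq_add_of_le hn
    rw [pow_add, hx, zero_mul]
  -- LHS chain
  have L1 : x ^ (2*m - s) * (H + x) ^ s
      = ∑ t ∈ range (s+1), s.choose t • (H ^ t * x ^ (2*m - t)) := by
    rw [add_pow, Finset.mul_sum]
    refine Finset.sum_congr rfl fun t ht => ?_
    have ht' : t ≤ s := by simpa [Nat.lt_succ_iff] using ht
    have he : (s - t) + (2*m - s) = 2*m - t := by omega
    rw [nsmul_eq_mul]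
    calc x ^ (2*m-s) * (H^t * x^(s-t) * (s.choose t : Q))
        = (s.choose t : Q) * (H^t * (x^(s-t) * x^(2*m-s))) := by ring
      _ = _ := by rw [← pow_add, he]
  have L2 : ∑ t ∈ range (s+1), s.choose t • (H^t * x^(2*m-t))
      = ∑ t ∈ range (2*m+1), s.choose t • (H^t * x^(2*m-t)) := by
    refine Finset.sum_subset (Finset.range_subset_range.mpr (by omega)) ?_
    intro t _ ht
    have : s < t := by simpa [Nat.lt_succ_iff, not_le] using ht
    rw [Nat.choose_eq_zero_of_lt this, zero_smul]
  have L3 : ∑ t ∈ range (2*m+1), s.choose t • (H^t * x^(2*m-t))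
      = ∑ e ∈ range (2*m+1), s.choose (2*m-e) • (H^(2*m-e) * x^e) := by
    rw [← Finset.sum_range_reflect (fun t => s.choose t • (H^t * x^(2*m-t))) (2*m+1)]
    refine Finset.sum_congr rfl fun e he => ?_
    have he' : e ≤ 2*m := by simpa [Nat.lt_succ_iff] using he
    have e1 : 2*m+1-1-e = 2*m-e := by omega
    have e2 : 2*m-(2*m-e) = e := by omega
    rw [e1, e2]
  have L4 : ∑ e ∈ range (2*m+1), s.choose (2*m-e) • (H^(2*m-e) * x^e)
      = ∑ e ∈ range (m+1), s.choose (2*m-e) • (H^(2*m-e) * x^e) := by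
    refine (Finset.sum_subset (Finset.range_subset_range.mpr (by omega)) ?_).symm
    intro e _ he
    have h1 : m+1 ≤ e := by simpa [Nat.lt_succ_iff, not_le] using he
    rw [hxn e h1, mul_zero, smul_zero]
  -- RHS chain
  have R1 : ∀ k ∈ Icc 1 (m+1),
      (if k ≤ s then (s-k).choose (m-1) else 0) •
          (H ^ m * (x ^ (m+1-k) * (H + x) ^ (k-1)))
        = ∑ r ∈ range (m+1),
            ((if k ≤ s then (s-k).choose (m-1) else 0) * (k-1).choose r) •
              (H^(m+r) * x^(m-r)) := by
    intro k hk
    obtain ⟨hk1, hk2⟩ := Finset.mem_Icc.mp hk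
    rw [add_pow, Finset.mul_sum, Finset.mul_sum, Finset.smul_sum]
    have hsub : ∑ r ∈ range (k-1+1),
        (if k ≤ s then (s-k).choose (m-1) else 0) •
          (H ^ m * (x^(m+1-k) * (H^r * x^(k-1-r) * ((k-1).choose r : Q))))
      = ∑ r ∈ range (m+1),
        (if k ≤ s then (s-k).choose (m-1) else 0) •
          (H ^ m * (x^(m+1-k) * (H^r * x^(k-1-r) * ((k-1).choose r : Q)))) := by
      refine Finset.sum_subset (Finset.range_subset_range.mpr (by omega)) ?_
      intro r _ hr
      have : k-1 < r := by simp only [Finset.mem_range, Nat.lt_succ_iff, not_le] at hr; omega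
      rw [Nat.choose_eq_zero_of_lt this]
      simp
    rw [hsub]
    refine Finset.sum_congr rfl fun r hr => ?_
    have hr' : r ≤ m := by simpa [Nat.lt_succ_iff] using hr
    rcases le_or_gt r (k-1) with hrk | hrk
    · have e1 : (m+1-k) + (k-1-r) = m - r := by omega
      rw [nsmul_eq_mul, nsmul_eq_mul]
      push_cast
      calc (_ : Q) * (H^m * (x^(m+1-k) * (H^r * x^(k-1-r) * ((k-1).choose r : Q))))
          = ((if k ≤ s then ((s-k).choose (m-1) : Q) else 0) * ((k-1).choose r : Q))
              * ((H^m * H^r) * (x^(m+1-k) * x^(k-1-r))) := by ring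
        _ = _ := by rw [← pow_add, ← pow_add, e1]
    · rw [Nat.choose_eq_zero_of_lt hrk]
      simp
  rw [L1, L2, L3, L4, Finset.sum_congr rfl R1, Finset.sum_comm]
  have R3 : ∀ r ∈ range (m+1),
      ∑ k ∈ Icc 1 (m+1),
          ((if k ≤ s then (s-k).choose (m-1) else 0) * (k-1).choose r) •
            (H^(m+r) * x^(m-r))
        = (∑ k ∈ Icc 1 (m+1), (if k ≤ s then (s-k).choose (m-1) else 0) * (k-1).choose r) •
            (H^(m+r) * x^(m-r)) := by
    intro r _
    rw [Finset.sum_smul]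
  rw [Finset.sum_congr rfl R3,
    ← Finset.sum_range_reflect
      (fun r => (∑ k ∈ Icc 1 (m+1),
        (if k ≤ s then (s-k).choose (m-1) else 0) * (k-1).choose r) • (H^(m+r) * x^(m-r)))
      (m+1)]
  refine Finset.sum_congr rfl fun e he => ?_
  have he' : e ≤ m := by simpa [Nat.lt_succ_iff] using he
  have e1 : m+1-1-e = m-e := by omega
  have e2 : m+(m-e) = 2*m-e := by omega
  have e3 : m-(m-e) = e := by omega
  rw [e1, e2, e3, key_choose m s (m-e) hm hs (by omega)]
  have e4 : m+(m-e) = 2*m-e := by omega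
  rw [e4]

/-- The cohomological h-deformed Littlewood-Richardson numbers of ℙ^m:
in `R_m = ℤ[h][X]/(X^(m+1))`, with `u_i = X^(m+1-i) (h+X)^(i-1)`, one has
`u_i * u_j = ∑_k C(i+j-k-2, m-1) h^m u_k`. -/
theorem csm_structure_constants_proj (m : ℕ) (hm : 1 ≤ m) (i j : ℕ)
    (hi1 : 1 ≤ i) (hi2 : i ≤ m + 1) (hj1 : 1 ≤ j) (hj2 : j ≤ m + 1) :
    Ideal.Quotient.mk (Ideal.span {(X : (ℤ[X])[X]) ^ (m + 1)})
        ((X ^ (m + 1 - i) * (C X + X) ^ (i - 1)) *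
          (X ^ (m + 1 - j) * (C X + X) ^ (j - 1))) =
      ∑ k ∈ Finset.Icc 1 (m + 1),
        Ideal.Quotient.mk (Ideal.span {(X : (ℤ[X])[X]) ^ (m + 1)})
          (C ((if (i : ℤ) + j - k - 2 < 0 then 0
                else ((i + j - k - 2).choose (m - 1) : ℤ[X])) * X ^ m) *
            (X ^ (m + 1 - k) * (C X + X) ^ (k - 1))) := by
  set φ := Ideal.Quotient.mk (Ideal.span {(X : (ℤ[X])[X]) ^ (m + 1)}) with hφ
  set s := i + j - 2 with hsdef
  have hs2 : s ≤ 2*m := by omega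
  have hx : (φ X) ^ (m+1) = 0 := by
    rw [← map_pow]
    exact Ideal.Quotient.eq_zero_iff_mem.mpr (Ideal.subset_span (Set.mem_singleton _))
  have hL : φ ((X ^ (m + 1 - i) * (C X + X) ^ (i - 1)) *
          (X ^ (m + 1 - j) * (C X + X) ^ (j - 1)))
      = (φ X) ^ (2*m - s) * (φ (C X) + φ X) ^ s := by
    have e1 : (m+1-i)+(m+1-j) = 2*m - s := by omega
    have e2 : (i-1)+(j-1) = s := by omega
    simp only [map_mul, map_pow, map_add]
    rw [← e1, ← e2, pow_add (φ X), pow_add (φ (C X) + φ X)]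
    ring
  rw [hL, quot_main m hm s hs2 (φ X) (φ (C X)) hx]
  refine Finset.sum_congr rfl fun k hk => ?_
  obtain ⟨hk1, hk2⟩ := Finset.mem_Icc.mp hk
  have hc : (if (i : ℤ) + j - k - 2 < 0 then 0
        else ((i + j - k - 2).choose (m - 1) : ℤ[X]))
      = (((if k ≤ s then (s-k).choose (m-1) else 0 : ℕ)) : ℤ[X]) := by
    by_cases hkg : k ≤ s
    · rw [if_neg (by omega), if_pos hkg]
      have e3 : i + j - k - 2 = s - k := by omega
      rw [e3]
    · rw [if_pos (by omega), if_neg hkg]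
      simp
  rw [hc]
  simp only [map_mul, map_pow, map_add, map_natCast, nsmul_eq_mul]
  ring
end

section
/- Let m ≥ 1 be an integer and let R_m = ℤ[h][X]/(X^{m+1}). For 1 ≤ i ≤ m+1 set u_i = X^{m+1−i}(h+X)^{i−1} ∈ R_m. Then u_{m+1}^2 = Σ_{k=1}^{m+1} C(2m−k, m−1) h^m u_k in R_m, where C(p,q) denotes the binomial coefficient. -/
open Polynomial Finset

/-!
Comparing coefficients of `X^d` for `d ≤ m`, both sides equal `C(2m, d) h^(2m-d)`. On the right
this is the convolution `∑_{i+j=n} C(a+i, a) C(b+j, b) = C(a+b+1+n, a+b+1)`, which is the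
coefficient of `x^n` in `(1-x)^-(a+1) (1-x)^-(b+1) = (1-x)^-(a+b+2)`.
-/

theorem Nat.sum_antidiagonal_add_choose_mul_add_choose (a b n : ℕ) :
    ∑ ij ∈ antidiagonal n, (a + ij.1).choose a * (b + ij.2).choose b =
      (a + b + 1 + n).choose (a + b + 1) := by
  have h := congrArg (PowerSeries.coeff n ∘ Units.val)
    (PowerSeries.invOneSubPow_add ℤ (a + 1) (b + 1))
  rw [show a + 1 + (b + 1) = a + b + 1 + 1 by ring] at h
  simp only [Function.comp_apply, Units.val_mul,
    PowerSeries.invOneSubPow_val_succ_eq_mk_add_choose, PowerSeries.coeff_mul,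
    PowerSeries.coeff_mk] at h
  exact_mod_cast h.symm

namespace Polynomial

variable {A : Type*} [CommRing A]

theorem coeff_X_pow_mul_C_add_X_pow (a : A) (i j d : ℕ) :
    (X ^ i * (C a + X) ^ j).coeff d =
      if i ≤ d then a ^ (j - (d - i)) * j.choose (d - i) else 0 := by
  rw [coeff_X_pow_mul', add_comm, coeff_X_add_C_pow]

theorem coeff_sum_add_choose_mul_X_pow_mul_C_add_X_pow (a : A) (m : ℕ) {n d : ℕ} (hd : d ≤ n) :
    (∑ i ∈ range (n + 1), ((m + i).choose m : A[X]) * X ^ i * (C a + X) ^ (n - i)).coeff d =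
      a ^ (n - d) * (m + n + 1).choose d := by
  simp only [finsetSum_coeff, mul_assoc, coeff_natCast_mul, coeff_X_pow_mul_C_add_X_pow]
  rw [← sum_range_add_sum_Ico _ (show d + 1 ≤ n + 1 by omega), sum_eq_zero (s := Ico _ _),
    add_zero]
  swap
  · intro i hi
    rw [if_neg (by simp at hi; omega), mul_zero]
  have convolution := Nat.sum_antidiagonal_add_choose_mul_add_choose m (n - d) d
  rw [Nat.sum_antidiagonal_eq_sum_range_succ_mk, show m + (n - d) + 1 + d = m + n + 1 by omega,
    Nat.choose_symm_of_eq_add (show m + n + 1 = m + (n - d) + 1 + d by omega)] at convolution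
  rw [← convolution, Nat.cast_sum, mul_sum]
  refine sum_congr rfl fun i hi => ?_
  have hi : i ≤ d := by simpa [Nat.lt_succ_iff] using hi
  rw [if_pos hi, show n - i - (d - i) = n - d by omega, show n - i = n - d + (d - i) by omega,
    ← Nat.choose_symm_add (a := n - d)]
  push_cast
  ring

theorem X_pow_succ_dvd_C_add_X_pow_sub (a : A) (m n : ℕ) :
    X ^ (n + 1) ∣ (C a + X) ^ (m + n + 1) - C a ^ (m + 1) *
      ∑ i ∈ range (n + 1), ((m + i).choose m : A[X]) * X ^ i * (C a + X) ^ (n - i) := by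
  rw [X_pow_dvd_iff]
  intro d hd
  rw [coeff_sub, ← C_pow, coeff_C_mul,
    coeff_sum_add_choose_mul_X_pow_mul_C_add_X_pow a m (by omega), add_comm (C a),
    coeff_X_add_C_pow, ← mul_assoc, ← pow_add, sub_eq_zero]
  congr 2
  omega

end Polynomial

theorem csm_structure_constants_proj_open_cell_general (m : ℕ) :
    Ideal.Quotient.mk (Ideal.span {(X : (ℤ[X])[X]) ^ (m + 1)})
        ((C X + X) ^ m * (C X + X) ^ m) =
      ∑ k ∈ Finset.Icc 1 (m + 1),
        Ideal.Quotient.mk (Ideal.span {(X : (ℤ[X])[X]) ^ (m + 1)})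
          (C (((2 * m - k).choose (m - 1) : ℤ[X]) * X ^ m) *
            (X ^ (m + 1 - k) * (C X + X) ^ (k - 1))) := by
  rcases m with _ | p
  · simp
  have reindex : ∑ k ∈ Icc 1 (p + 1 + 1),
      C (((2 * (p + 1) - k).choose (p + 1 - 1) : ℤ[X]) * X ^ (p + 1)) *
        (X ^ (p + 1 + 1 - k) * (C X + X) ^ (k - 1)) =
      C X ^ (p + 1) * ∑ i ∈ range (p + 1 + 1),
        ((p + i).choose p : ℤ[X][X]) * X ^ i * (C X + X) ^ (p + 1 - i) := by
    rw [mul_sum]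
    refine sum_nbij' (fun k => p + 2 - k) (fun i => p + 2 - i) ?_ ?_ ?_ ?_ ?_ <;> intro k hk <;>
      simp only [mem_Icc, mem_range] at hk ⊢
    iterate 4 omega
    rw [show 2 * (p + 1) - k = p + (p + 2 - k) by omega, show p + 1 + 1 - k = p + 2 - k by omega,
      show k - 1 = p + 1 - (p + 2 - k) by omega, C_mul, ← C_pow, Nat.add_sub_cancel, map_natCast]
    ring
  rw [← map_sum, Ideal.Quotient.eq, Ideal.mem_span_singleton, ← pow_add, reindex]
  convert X_pow_succ_dvd_C_add_X_pow_sub (X : ℤ[X]) p (p + 1) using 3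
  ring

/-- In `R_m = ℤ[h][X]/(X^(m+1))`, with `u_i = X^(m+1-i) (h+X)^(i-1)`, one has
`u_(m+1)^2 = ∑_k C(2m-k, m-1) h^m u_k`. -/
theorem csm_structure_constants_proj_open_cell (m : ℕ) (hm : 1 ≤ m) :
    Ideal.Quotient.mk (Ideal.span {(X : (ℤ[X])[X]) ^ (m + 1)})
        ((C X + X) ^ m * (C X + X) ^ m) =
      ∑ k ∈ Finset.Icc 1 (m + 1),
        Ideal.Quotient.mk (Ideal.span {(X : (ℤ[X])[X]) ^ (m + 1)})
          (C (((2 * m - k).choose (m - 1) : ℤ[X]) * X ^ m) *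
            (X ^ (m + 1 - k) * (C X + X) ^ (k - 1))) :=
  csm_structure_constants_proj_open_cell_general m
end

section
/- Let m ≥ 1 be an integer and let S_m = ℤ[h][Y]/(Y^{m+1}). For 1 ≤ i ≤ m+1 set w_i = (1−Y)·Y^{m+1−i}·((1+h)−hY)^{i−1} ∈ S_m. Then for all 1 ≤ i, j ≤ m+1 one has h^m · w_i · w_j = Σ_{k=1}^{m+1} (−1)^{m+i+j+k+1} (1+h)^m · [ C(i+j−k−2, m) h^{i+j−k−2} + C(i+j−k−1, m) h^{i+j−k−1} ] · w_k in S_m, where C(p,q) denotes the binomial coefficient with the convention that an entire summand C(p,q)h^{p} is 0 whenever p < q or p < 0. (In particular the coefficient of w_k vanishes unless k ≤ i and k ≤ j.) -/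
open Polynomial Finset

section Core
variable {A : Type*} [CommRing A]

def bbF (h : A) (m p : ℕ) : A :=
  (-1)^p * (1+h)^m * (((m+p-1).choose m : ℕ) + h * ((m+p).choose m : ℕ))

def gamF (h : A) (m d r : ℕ) : A :=
  (-1)^(d+1+r) * (h * (1+h)^(m-1-r) * (((m+d).choose (d+1+r) : ℕ))
    + (1+h)^(m-r) * (((m+d).choose (d+r) : ℕ)))

def ggF (h W : A) (m d : ℕ) : A := ∑ r ∈ range (m+1), gamF h m d r * W^r

lemma core_base (h W : A) (m : ℕ) (hm : 1 ≤ m) :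
    (h - W) * (1+h-W)^m = bbF h m 0 + W * ggF h W m 0 := by
  obtain ⟨m₁, rfl⟩ : ∃ m₁, m = m₁ + 1 := ⟨m - 1, by omega⟩
  have expand : (1+h-W)^(m₁+1) =
      ∑ k ∈ range (m₁+1+1), (-W)^k * (1+h)^(m₁+1-k) * ((m₁+1).choose k : ℕ) := by
    have := add_pow (-W) (1+h) (m₁+1)
    rw [show -W + (1+h) = 1+h-W by ring] at this
    rw [this]
  rw [expand, bbF, ggF]
  rw [sub_mul, mul_sum, mul_sum]
  rw [Finset.sum_range_succ' (fun k => h * ((-W)^k * (1+h)^(m₁+1-k) * ((m₁+1).choose k : ℕ)))]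
  simp only [pow_zero, Nat.sub_zero, Nat.choose_zero_right, Nat.cast_one, one_mul, mul_one]
  rw [show m₁+1+0-1 = m₁ by omega, show m₁+1+0 = m₁+1 by omega,
    Nat.choose_eq_zero_of_lt (by omega : m₁ < m₁+1), Nat.choose_self]
  have hext : ∑ k ∈ range (m₁+1), h * ((-W)^(k+1) * (1+h)^(m₁+1-(k+1)) * ((m₁+1).choose (k+1) : ℕ))
      = ∑ k ∈ range (m₁+1+1), h * ((-W)^(k+1) * (1+h)^(m₁+1-(k+1)) * ((m₁+1).choose (k+1) : ℕ)) := by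
    rw [Finset.sum_range_succ
      (fun k => h * ((-W)^(k+1) * (1+h)^(m₁+1-(k+1)) * ((m₁+1).choose (k+1) : ℕ))) (m₁+1),
      Nat.choose_eq_zero_of_lt (by omega : m₁+1 < m₁+1+1)]
    push_cast; ring
  rw [hext, mul_sum]
  have key : ∑ k ∈ range (m₁+1+1),
        (h * ((-W)^(k+1) * (1+h)^(m₁+1-(k+1)) * ((m₁+1).choose (k+1) : ℕ))
          - W * ((-W)^k * (1+h)^(m₁+1-k) * ((m₁+1).choose k : ℕ)))
      = ∑ k ∈ range (m₁+1+1), W * (gamF h (m₁+1) 0 k * W^k) := by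
    apply Finset.sum_congr rfl
    intro k hk
    rw [gamF, show m₁+1-(k+1) = m₁+1-1-k from by omega]
    ring
  rw [sum_sub_distrib] at key
  simp only [Nat.cast_zero, Nat.cast_one]
  linear_combination key

lemma c1 (h : A) (m d : ℕ) (hm : 1 ≤ m) : (1+h) * gamF h m d 0 = bbF h m (d+1) := by
  obtain ⟨m₁, rfl⟩ : ∃ m₁, m = m₁ + 1 := ⟨m - 1, by omega⟩
  rw [gamF, bbF]
  rw [show m₁+1-1-0 = m₁ by omega, show m₁+1-0 = m₁+1 by omega,
    show m₁+1+(d+1)-1 = m₁+1+d by omega,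
    show (m₁+1+d).choose (d+0) = (m₁+1+d).choose (m₁+1) from by
      rw [← Nat.choose_symm (by omega)]; congr 1; omega,
    show (m₁+1+d).choose (d+1+0) = (m₁+1+d).choose m₁ from by
      rw [← Nat.choose_symm (by omega)]; congr 1; omega,
    show m₁+1+(d+1) = (m₁+(d+1))+1 by omega,
    show m₁+1 = m₁+1 from rfl]
  rw [Nat.choose_succ_succ (m₁+(d+1)) m₁]
  rw [show m₁+(d+1) = m₁+1+d by omega]
  push_cast
  ring

lemma c2 (h : A) (m d r : ℕ) (hr : r < m) :
    (1+h) * gamF h m d (r+1) = gamF h m (d+1) r + gamF h m d r := by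
  rcases Nat.lt_or_ge (r+1) m with hcase | hcase
  · obtain ⟨e, rfl⟩ : ∃ e, m = r+2+e := ⟨m - (r+2), by omega⟩
    rw [gamF, gamF, gamF]
    rw [show r+2+e-1-(r+1) = e by omega, show r+2+e-(r+1) = e+1 by omega,
      show r+2+e-1-r = e+1 by omega, show r+2+e-r = e+2 by omega,
      show r+2+e+(d+1) = (r+2+e+d)+1 by omega,
      show d+1+1+r = (d+r+1)+1 by omega,
      Nat.choose_succ_succ (r+2+e+d) (d+r+1),
      show d+1+(r+1) = (d+r+1)+1 by omega,
      show d+1+r = (d+r)+1 by omega,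
      Nat.choose_succ_succ (r+2+e+d) (d+r),
      show d+(r+1) = (d+r)+1 by omega]
    push_cast
    ring
  · obtain rfl : m = r+1 := by omega
    rw [gamF, gamF, gamF]
    rw [show r+1-1-(r+1) = 0 by omega, show r+1-(r+1) = 0 by omega,
      show r+1-1-r = 0 by omega, show r+1-r = 1 by omega,
      Nat.choose_eq_zero_of_lt (show r+1+d < d+1+(r+1) by omega),
      show (r+1+d).choose (d+(r+1)) = 1 from by
        rw [show d+(r+1) = r+1+d by omega, Nat.choose_self],
      show (r+1+(d+1)).choose (d+1+1+r) = 1 from by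
        rw [show d+1+1+r = r+1+(d+1) by omega, Nat.choose_self],
      show (r+1+(d+1)).choose (d+1+r) = r+d+2 from by
        rw [show d+1+r = r+1+(d+1)-1 by omega,
          Nat.choose_symm (show 1 ≤ r+1+(d+1) by omega), Nat.choose_one_right]; omega,
      show (r+1+d).choose (d+1+r) = 1 from by
        rw [show d+1+r = r+1+d by omega, Nat.choose_self],
      show (r+1+d).choose (d+r) = r+d+1 from by
        rw [show d+r = r+1+d-1 by omega,
          Nat.choose_symm (show 1 ≤ r+1+d by omega), Nat.choose_one_right]; omega]
    push_cast
    ring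

lemma c3 (h : A) (m d : ℕ) : gamF h m (d+1) m = - gamF h m d m := by
  rw [gamF, gamF]
  rw [show m-1-m = 0 by omega, show m-m = 0 by omega,
    Nat.choose_eq_zero_of_lt (show m+d < d+1+m by omega),
    Nat.choose_eq_zero_of_lt (show m+(d+1) < d+1+1+m by omega),
    show (m+d).choose (d+m) = 1 from by rw [show d+m = m+d by omega, Nat.choose_self],
    show (m+(d+1)).choose (d+1+m) = 1 from by
      rw [show d+1+m = m+(d+1) by omega, Nat.choose_self]]
  push_cast
  ring

lemma step2 (h W : A) (m d : ℕ) (hm : 1 ≤ m) :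
    (1+h-W) * ggF h W m d = bbF h m (d+1) + W * ggF h W m (d+1) := by
  rw [ggF, ggF, sub_mul]
  have h1 : (1+h) * ∑ r ∈ range (m+1), gamF h m d r * W^r
      = bbF h m (d+1) + (∑ r ∈ range m, gamF h m (d+1) r * W^(r+1)
          + ∑ r ∈ range m, gamF h m d r * W^(r+1)) := by
    rw [mul_sum, Finset.sum_range_succ' (fun r => (1+h) * (gamF h m d r * W^r))]
    rw [show (1+h) * (gamF h m d 0 * W^0) = bbF h m (d+1) from by
      rw [← c1 h m d hm]; ring]
    rw [← sum_add_distrib]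
    rw [Finset.sum_congr rfl (fun r hr => by
      rw [show (1+h) * (gamF h m d (r+1) * W^(r+1))
          = ((1+h) * gamF h m d (r+1)) * W^(r+1) from by ring,
        c2 h m d r (mem_range.mp hr), add_mul])]
    ring
  have h2 : ∀ d' : ℕ, W * ∑ r ∈ range (m+1), gamF h m d' r * W^r
      = (∑ r ∈ range m, gamF h m d' r * W^(r+1)) + gamF h m d' m * W^(m+1) := by
    intro d'
    rw [mul_sum, Finset.sum_range_succ (fun r => W * (gamF h m d' r * W^r))]
    rw [Finset.sum_congr rfl (fun r hr => by
      rw [show W * (gamF h m d' r * W^r) = gamF h m d' r * W^(r+1) from by ring])]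
    ring
  rw [h1, h2 d, h2 (d+1)]
  linear_combination (-(W^(m+1))) * c3 h m d

lemma coreF (h W : A) (m : ℕ) (hm : 1 ≤ m) (d : ℕ) :
    (h - W) * (1+h-W)^(m+d)
      = (∑ p ∈ range (d+1), bbF h m p * W^p * (1+h-W)^(d-p)) + W^(d+1) * ggF h W m d := by
  induction d with
  | zero =>
    simpa using core_base h W m hm
  | succ d ih =>
    have hR : ∑ p ∈ range (d+1+1), bbF h m p * W^p * (1+h-W)^(d+1-p)
        = (1+h-W) * (∑ p ∈ range (d+1), bbF h m p * W^p * (1+h-W)^(d-p))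
          + bbF h m (d+1) * W^(d+1) := by
      rw [Finset.sum_range_succ (fun p => bbF h m p * W^p * (1+h-W)^(d+1-p))]
      rw [show d+1-(d+1) = 0 by omega, mul_sum]
      congr 1
      · exact Finset.sum_congr rfl (fun p hp => by
          rw [show d+1-p = (d-p)+1 from by have := mem_range.mp hp; omega, pow_succ]
          ring)
      · rw [pow_zero, mul_one]
    have hL : (h-W) * (1+h-W)^(m+(d+1)) = (1+h-W) * ((h-W) * (1+h-W)^(m+d)) := by
      rw [show m+(d+1) = (m+d)+1 by omega, pow_succ]; ring
    rw [hL, ih, hR]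
    have := step2 h W m d hm
    linear_combination W^(d+1) * this

lemma cancelC (m N : ℕ) (A B : (ℤ[X])[X])
    (h : Ideal.Quotient.mk (Ideal.span {(X : (ℤ[X])[X]) ^ (m + 1)}) (C (X ^ N) * A)
      = Ideal.Quotient.mk (Ideal.span {(X : (ℤ[X])[X]) ^ (m + 1)}) (C (X ^ N) * B)) :
    Ideal.Quotient.mk (Ideal.span {(X : (ℤ[X])[X]) ^ (m + 1)}) A
      = Ideal.Quotient.mk (Ideal.span {(X : (ℤ[X])[X]) ^ (m + 1)}) B := by
  rw [Ideal.Quotient.eq] at h ⊢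
  rw [Ideal.mem_span_singleton] at h ⊢
  rw [← mul_sub] at h
  have hX : ¬ (X : (ℤ[X])[X]) ∣ C ((X : ℤ[X]) ^ N) := by
    rintro ⟨q, hq⟩
    have h0 := congrArg (fun p => Polynomial.coeff p 0) hq
    simp only [Polynomial.coeff_C_zero, Polynomial.mul_coeff_zero,
      Polynomial.coeff_X_zero, zero_mul] at h0
    exact pow_ne_zero N Polynomial.X_ne_zero h0
  exact Polynomial.prime_X.pow_dvd_of_dvd_mul_left (m+1) hX h

end Core

/-- The K-theoretic h-deformed Littlewood-Richardson numbers of ℙ^m: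
in `S_m = ℤ[h][Y]/(Y^(m+1))`, with `w_i = (1-Y) Y^(m+1-i) ((1+h)-hY)^(i-1)`, one has
`h^m w_i w_j = ∑_k (-1)^(m+i+j+k+1) (1+h)^m (C(i+j-k-2,m) h^(i+j-k-2)
  + C(i+j-k-1,m) h^(i+j-k-1)) w_k`,
where a summand `C(p,q) h^p` is zero whenever `p < 0` or `p < q`. -/
theorem mC_structure_constants_proj (m : ℕ) (hm : 1 ≤ m) (i j : ℕ)
    (hi1 : 1 ≤ i) (hi2 : i ≤ m + 1) (hj1 : 1 ≤ j) (hj2 : j ≤ m + 1) :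
    Ideal.Quotient.mk (Ideal.span {(X : (ℤ[X])[X]) ^ (m + 1)})
        (C ((X : ℤ[X]) ^ m) *
          (((1 - X) * X ^ (m + 1 - i) * (C (1 + X) - C X * X) ^ (i - 1)) *
            ((1 - X) * X ^ (m + 1 - j) * (C (1 + X) - C X * X) ^ (j - 1)))) =
      ∑ k ∈ Finset.Icc 1 (m + 1),
        Ideal.Quotient.mk (Ideal.span {(X : (ℤ[X])[X]) ^ (m + 1)})
          (C ((-1 : ℤ[X]) ^ (m + i + j + k + 1) * (1 + X) ^ m *
                ((if (i : ℤ) + j - k - 2 < 0 then 0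
                    else ((i + j - k - 2).choose m : ℤ[X]) * X ^ (i + j - k - 2)) +
                  (if (i : ℤ) + j - k - 1 < 0 then 0
                    else ((i + j - k - 1).choose m : ℤ[X]) * X ^ (i + j - k - 1)))) *
            ((1 - X) * X ^ (m + 1 - k) * (C (1 + X) - C X * X) ^ (k - 1))) := by
  by_cases hs : i + j ≤ m + 1
  · -- both sides vanish
    have hL : Ideal.Quotient.mk (Ideal.span {(X : (ℤ[X])[X]) ^ (m + 1)})
        (C ((X : ℤ[X]) ^ m) *
          (((1 - X) * X ^ (m + 1 - i) * (C (1 + X) - C X * X) ^ (i - 1)) *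
            ((1 - X) * X ^ (m + 1 - j) * (C (1 + X) - C X * X) ^ (j - 1)))) = 0 := by
      rw [Ideal.Quotient.eq_zero_iff_mem, Ideal.mem_span_singleton]
      obtain ⟨e, he⟩ : ∃ e, (m + 1 - i) + (m + 1 - j) = (m + 1) + e := ⟨(m + 1 - i) + (m + 1 - j) - (m + 1), by omega⟩
      refine ⟨X ^ e * (C ((X : ℤ[X]) ^ m) * ((1 - X) * (C (1 + X) - C X * X) ^ (i - 1)
        * ((1 - X) * (C (1 + X) - C X * X) ^ (j - 1)))), ?_⟩
      have hXX : (X : (ℤ[X])[X]) ^ (m + 1 - i) * X ^ (m + 1 - j) = X ^ (m+1) * X ^ e := by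
        rw [← pow_add, he, pow_add]
      calc C ((X : ℤ[X]) ^ m) *
          (((1 - X) * X ^ (m + 1 - i) * (C (1 + X) - C X * X) ^ (i - 1)) *
            ((1 - X) * X ^ (m + 1 - j) * (C (1 + X) - C X * X) ^ (j - 1)))
          = (X ^ (m + 1 - i) * X ^ (m + 1 - j)) * (C ((X : ℤ[X]) ^ m) *
              ((1 - X) * (C (1 + X) - C X * X) ^ (i - 1)
                * ((1 - X) * (C (1 + X) - C X * X) ^ (j - 1)))) := by ring
        _ = _ := by rw [hXX]; ring
    rw [hL]
    symm
    apply Finset.sum_eq_zero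
    intro k hk
    rw [mem_Icc] at hk
    have h1 : (if (i : ℤ) + j - k - 2 < 0 then 0
        else ((i + j - k - 2).choose m : ℤ[X]) * X ^ (i + j - k - 2)) = 0 := by
      split_ifs
      · rfl
      · rw [Nat.choose_eq_zero_of_lt (by omega), Nat.cast_zero, zero_mul]
    have h2 : (if (i : ℤ) + j - k - 1 < 0 then 0
        else ((i + j - k - 1).choose m : ℤ[X]) * X ^ (i + j - k - 1)) = 0 := by
      split_ifs
      · rfl
      · rw [Nat.choose_eq_zero_of_lt (by omega), Nat.cast_zero, zero_mul]
    rw [h1, h2, add_zero, mul_zero, map_zero, zero_mul, map_zero]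
  · -- main case: i + j ≥ m + 2
    obtain ⟨m₁, rfl⟩ : ∃ m₁, m = m₁ + 1 := ⟨m - 1, by omega⟩
    obtain ⟨d, hdm, hij⟩ : ∃ d, d ≤ m₁ + 1 ∧ i + j = m₁ + 3 + d :=
      ⟨i + j - (m₁ + 3), by omega, by omega⟩
    rw [← map_sum]
    simp only [C_add, C_1]
    obtain ⟨a, a', b, b', ha, ha', hb, hb', hab, hab'⟩ :
        ∃ a a' b b', i - 1 = a ∧ m₁ + 1 + 1 - i = a' ∧ j - 1 = b ∧ m₁ + 1 + 1 - j = b' ∧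
          a + b = m₁ + 1 + d ∧ a' + b' = m₁ + 1 - d :=
      ⟨i - 1, m₁ + 1 + 1 - i, j - 1, m₁ + 1 + 1 - j, rfl, rfl, rfl, rfl, by omega, by omega⟩
    rw [ha, ha', hb, hb']
    apply cancelC (m₁ + 1) (d + 3)
    have hsum1 : ∑ k ∈ Finset.Icc 1 (m₁ + 1 + 1),
          (C ((-1 : ℤ[X]) ^ (m₁ + 1 + i + j + k + 1) * (1 + X) ^ (m₁ + 1) *
                ((if (i : ℤ) + j - k - 2 < 0 then 0
                    else ((i + j - k - 2).choose (m₁ + 1) : ℤ[X]) * X ^ (i + j - k - 2)) +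
                  (if (i : ℤ) + j - k - 1 < 0 then 0
                    else ((i + j - k - 1).choose (m₁ + 1) : ℤ[X]) * X ^ (i + j - k - 1)))) *
            ((1 - X) * X ^ (m₁ + 1 + 1 - k) * (1 + C X - C X * X) ^ (k - 1)))
        = ∑ p ∈ range (d + 1),
          (C ((-1 : ℤ[X]) ^ (m₁ + 1 + i + j + (1 + (d - p)) + 1) * (1 + X) ^ (m₁ + 1) *
                ((if (i : ℤ) + j - ((1 + (d - p) : ℕ) : ℤ) - 2 < 0 then 0
                    else ((i + j - (1 + (d - p)) - 2).choose (m₁ + 1) : ℤ[X]) * X ^ (i + j - (1 + (d - p)) - 2)) +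
                  (if (i : ℤ) + j - ((1 + (d - p) : ℕ) : ℤ) - 1 < 0 then 0
                    else ((i + j - (1 + (d - p)) - 1).choose (m₁ + 1) : ℤ[X]) * X ^ (i + j - (1 + (d - p)) - 1)))) *
            ((1 - X) * X ^ (m₁ + 1 + 1 - (1 + (d - p))) * (1 + C X - C X * X) ^ ((1 + (d - p)) - 1))) := by
      rw [← Finset.sum_subset (Finset.Icc_subset_Icc_right (by omega : d + 1 ≤ m₁ + 1 + 1))]
      · apply Finset.sum_nbij' (fun k => d + 1 - k) (fun p => 1 + (d - p))
        · intro k hk; rw [Finset.mem_Icc] at hk; rw [Finset.mem_range]; omega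
        · intro p hp; rw [Finset.mem_range] at hp; rw [Finset.mem_Icc]; omega
        · intro k hk; rw [Finset.mem_Icc] at hk; omega
        · intro p hp; rw [Finset.mem_range] at hp; omega
        · intro k hk
          rw [Finset.mem_Icc] at hk
          rw [show 1 + (d - (d + 1 - k)) = k by omega]
      · intro k hk hk'
        rw [Finset.mem_Icc] at hk
        rw [Finset.mem_Icc] at hk'
        have e1 : (if (i : ℤ) + j - k - 2 < 0 then 0
            else ((i + j - k - 2).choose (m₁ + 1) : ℤ[X]) * X ^ (i + j - k - 2)) = 0 := by
          split_ifs
          · rfl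
          · rw [Nat.choose_eq_zero_of_lt (by omega), Nat.cast_zero, zero_mul]
        have e2 : (if (i : ℤ) + j - k - 1 < 0 then 0
            else ((i + j - k - 1).choose (m₁ + 1) : ℤ[X]) * X ^ (i + j - k - 1)) = 0 := by
          split_ifs
          · rfl
          · rw [Nat.choose_eq_zero_of_lt (by omega), Nat.cast_zero, zero_mul]
        rw [e1, e2, add_zero, mul_zero, map_zero, zero_mul]
    rw [hsum1, Finset.mul_sum]
    simp only [map_pow]
    have core := coreF (C X : (ℤ[X])[X]) (C X * X) (m₁+1) (by omega) d
    rw [show (m₁+1) + d = a + b by omega] at core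
    have hterm : ∀ p ∈ range (d+1),
        (C X : (ℤ[X])[X])^(d+3) *
          (C ((-1 : ℤ[X]) ^ (m₁ + 1 + i + j + (1 + (d - p)) + 1) * (1 + X) ^ (m₁ + 1) *
                ((if (i : ℤ) + j - ((1 + (d - p) : ℕ) : ℤ) - 2 < 0 then 0
                    else ((i + j - (1 + (d - p)) - 2).choose (m₁ + 1) : ℤ[X]) * X ^ (i + j - (1 + (d - p)) - 2)) +
                  (if (i : ℤ) + j - ((1 + (d - p) : ℕ) : ℤ) - 1 < 0 then 0
                    else ((i + j - (1 + (d - p)) - 1).choose (m₁ + 1) : ℤ[X]) * X ^ (i + j - (1 + (d - p)) - 1)))) *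
            ((1 - X) * X ^ (m₁ + 1 + 1 - (1 + (d - p))) * (1 + C X - C X * X) ^ ((1 + (d - p)) - 1)))
        = ((C X : (ℤ[X])[X])^(m₁+1+d+2) * (1-X) * X^(a'+b')) *
            (bbF (C X : (ℤ[X])[X]) (m₁+1) p * (C X * X)^p * (1 + C X - C X * X)^(d-p)) := by
      intro p hp
      rw [Finset.mem_range] at hp
      rw [if_neg (by omega), if_neg (by omega)]
      rw [show i+j-(1+(d-p))-2 = m₁+p by omega, show i+j-(1+(d-p))-1 = m₁+1+p by omega,
        show m₁+1+1-(1+(d-p)) = (a'+b')+p by omega,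
        show (1+(d-p))-1 = d-p by omega,
        show m₁+1+i+j+(1+(d-p))+1 = p + 2*(m₁+d+3-p) by omega]
      rw [show ((-1 : ℤ[X]))^(p+2*(m₁+d+3-p)) = (-1)^p from by
        rw [pow_add, pow_mul, neg_one_sq, one_pow, mul_one]]
      rw [bbF, show m₁+1+p-1 = m₁+p by omega]
      simp only [map_mul, map_pow, map_add, map_natCast, map_one, map_neg]
      ring
    rw [Finset.sum_congr rfl hterm, ← Finset.mul_sum]
    rw [Ideal.Quotient.eq, Ideal.mem_span_singleton]
    refine ⟨(C X : (ℤ[X])[X])^(m₁+1+d+2) * (C X)^(d+1) * (1-X) * ggF (C X : (ℤ[X])[X]) (C X * X) (m₁+1) d, ?_⟩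
    rw [show (X:(ℤ[X])[X])^(m₁+1+1) = X^(a'+b') * X^(d+1) from by rw [← pow_add]; congr 1; omega]
    linear_combination ((C X : (ℤ[X])[X])^(m₁+1+d+2) * (1-X) * X^(a'+b')) * core
end

section
/- Let m ≥ 1 be an integer and let S_m = ℤ[h][Y]/(Y^{m+1}). For 1 ≤ i ≤ m+1 set w_i = (1−Y)·Y^{m+1−i}·((1+h)−hY)^{i−1} ∈ S_m. Then h^m · w_{m+1}^2 = Σ_{k=1}^{m+1} (−1)^{m+k+1} (1+h)^m · [ C(2m−k, m) h^{2m−k} + C(2m−k+1, m) h^{2m−k+1} ] · w_k in S_m, where C(p,q) denotes the binomial coefficient. -/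
open Polynomial Finset


theorem star_identity : ∀ (a b n : ℕ),
    (∑ j ∈ Finset.range (n+1), (a+j).choose j * (b+(n-j)).choose (n-j))
      = (a+b+n+1).choose n := by
  intro a
  induction a with
  | zero =>
    intro b n
    induction n with
    | zero => simp
    | succ n ih =>
      rw [Finset.sum_range_succ']
      have h1 : ∀ i ∈ Finset.range (n+1),
          (0+(i+1)).choose (i+1) * (b+(n+1-(i+1))).choose (n+1-(i+1))
            = (0+i).choose i * (b+(n-i)).choose (n-i) := by
        intro i _
        simp [Nat.choose_self]
      rw [Finset.sum_congr rfl h1, ih]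
      have h2 : (0+b+(n+1)+1).choose (n+1) = (0+b+n+1).choose n + (b+n+1).choose (n+1) := by
        have e : 0+b+(n+1)+1 = (b+n+1)+1 := by omega
        rw [e, Nat.choose_succ_succ (b+n+1) n]
        congr 2
        omega
      rw [h2]
      simp [Nat.add_assoc]
  | succ a iha =>
    intro b n
    induction n with
    | zero => simp
    | succ n ihn =>
      rw [Finset.sum_range_succ']
      have h1 : ∀ i ∈ Finset.range (n+1),
          (a+1+(i+1)).choose (i+1) * (b+(n+1-(i+1))).choose (n+1-(i+1))
            = (a+1+i).choose i * (b+(n-i)).choose (n-i)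
              + (a+(i+1)).choose (i+1) * (b+(n+1-(i+1))).choose (n+1-(i+1)) := by
        intro i _
        have e : a+1+(i+1) = (a+1+i)+1 := by omega
        rw [e, Nat.choose_succ_succ (a+1+i) i]
        have e2 : n+1-(i+1) = n-i := by omega
        rw [e2, add_mul]
        congr 3
        omega
      rw [Finset.sum_congr rfl h1, Finset.sum_add_distrib]
      have key := iha b (n+1)
      rw [Finset.sum_range_succ'] at key
      have e3 : (∑ i ∈ Finset.range (n+1), (a+1+i).choose i * (b+(n-i)).choose (n-i))
          = (a+1+b+n+1).choose n := ihn
      have e5 : (a+1+b+(n+1)+1).choose (n+1)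
          = (a+b+(n+1)+1).choose (n+1) + (a+1+b+n+1).choose n := by
        have e : a+1+b+(n+1)+1 = (a+b+(n+1)+1)+1 := by omega
        rw [e, Nat.choose_succ_succ (a+b+(n+1)+1) n]
        have e' : a+b+(n+1)+1 = a+1+b+n+1 := by omega
        rw [e']
        simp only [Nat.succ_eq_add_one]
        omega
      simp only [Nat.choose_zero_right, one_mul, Nat.add_zero, Nat.succ_eq_add_one] at key ⊢
      rw [e3, e5]
      omega

theorem lemA (m n : ℕ) (hn : n ≤ m) :
    (∑ j ∈ Finset.range (n+1), (m+j).choose m * (m-j).choose (n-j))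
      = (2*m+1).choose n := by
  have h1 : ∀ j ∈ Finset.range (n+1),
      (m+j).choose m * (m-j).choose (n-j)
        = (m+j).choose j * ((m-n)+(n-j)).choose (n-j) := by
    intro j hj
    simp only [Finset.mem_range] at hj
    rw [Nat.choose_symm_add]
    congr 2
    omega
  rw [Finset.sum_congr rfl h1, star_identity]
  congr 1
  omega

theorem lemB (m n : ℕ) (hm : 1 ≤ m) (hn : n + 1 ≤ m) :
    (∑ j ∈ Finset.range (n+2), (m+j-1).choose m * (m-j).choose (n+1-j))
      = (2*m).choose n := by
  rw [Finset.sum_range_succ']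
  have h0 : (m+0-1).choose m * (m-0).choose (n+1-0) = 0 := by
    rw [Nat.choose_eq_zero_of_lt (by omega)]
    ring
  rw [h0, add_zero]
  have h1 : ∀ i ∈ Finset.range (n+1),
      (m+(i+1)-1).choose m * (m-(i+1)).choose (n+1-(i+1))
        = (m+i).choose i * ((m-(n+1))+(n-i)).choose (n-i) := by
    intro i hi
    simp only [Finset.mem_range] at hi
    have e1 : m+(i+1)-1 = m+i := by omega
    have e2 : m-(i+1) = (m-(n+1))+(n-i) := by omega
    have e3 : n+1-(i+1) = n-i := by omega
    rw [e1, e2, e3, Nat.choose_symm_add]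
  rw [Finset.sum_congr rfl h1, star_identity]
  congr 1
  omega

theorem coeff_linear_pow (a b : ℤ[X]) (N n : ℕ) :
    ((Polynomial.C b + Polynomial.C a * X)^N).coeff n
      = (N.choose n : ℤ[X]) * b^(N-n) * a^n := by
  rw [add_comm, add_pow, Polynomial.finset_sum_coeff]
  have h1 : ∀ k ∈ Finset.range (N+1),
      ((Polynomial.C a * X)^k * (Polynomial.C b)^(N-k) * (N.choose k : (ℤ[X])[X])).coeff n
        = if n = k then (N.choose k : ℤ[X]) * b^(N-k) * a^k else 0 := by
    intro k _
    have e : (Polynomial.C a * X)^k * (Polynomial.C b)^(N-k) * (N.choose k : (ℤ[X])[X])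
        = Polynomial.C ((N.choose k : ℤ[X]) * b^(N-k) * a^k) * X^k := by
      rw [mul_pow, ← Polynomial.C_pow, ← Polynomial.C_pow, ← Polynomial.C_eq_natCast]
      simp only [Polynomial.C_mul]
      ring
    rw [e, Polynomial.coeff_C_mul, Polynomial.coeff_X_pow, mul_ite, mul_one, mul_zero]
  rw [Finset.sum_congr rfl h1, Finset.sum_ite_eq]
  by_cases hn : n ∈ Finset.range (N+1)
  · rw [if_pos hn]
  · rw [if_neg hn]
    simp only [Finset.mem_range] at hn
    rw [Nat.choose_eq_zero_of_lt (by omega)]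
    simp

theorem coeff_u_pow (N n : ℕ) :
    ((Polynomial.C (1+(X:ℤ[X])) - Polynomial.C (X:ℤ[X]) * X)^N).coeff n
      = (N.choose n : ℤ[X]) * (1+(X:ℤ[X]))^(N-n) * (-1)^n * (X:ℤ[X])^n := by
  have e : (Polynomial.C (1+(X:ℤ[X])) - Polynomial.C (X:ℤ[X]) * X)
      = Polynomial.C (1+(X:ℤ[X])) + Polynomial.C (-(X:ℤ[X])) * X := by
    rw [Polynomial.C_neg]; ring
  rw [e, coeff_linear_pow, neg_pow]
  ring

theorem neg1pow (e c : ℕ) : (-1 : ℤ[X])^(e + 2*c) = (-1)^e := by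
  rw [pow_add, pow_mul]
  norm_num

theorem lemA' (m n : ℕ) (hn : n+1 ≤ m) :
    (∑ j ∈ Finset.range (n+2), (m+j).choose m * (m-j).choose (n+1-j))
      = (2*m+1).choose (n+1) := by
  have h := lemA m (n+1) hn
  simpa using h

/-- In `S_m = ℤ[h][Y]/(Y^(m+1))`, with `w_i = (1-Y) Y^(m+1-i) ((1+h)-hY)^(i-1)`, one has
`h^m w_(m+1)^2 = ∑_k (-1)^(m+k+1) (1+h)^m (C(2m-k,m) h^(2m-k) + C(2m-k+1,m) h^(2m-k+1)) w_k`. -/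
theorem mC_structure_constants_proj_open_cell (m : ℕ) (hm : 1 ≤ m) :
    Ideal.Quotient.mk (Ideal.span {(X : (ℤ[X])[X]) ^ (m + 1)})
        (C ((X : ℤ[X]) ^ m) *
          (((1 - X) * (C (1 + X) - C X * X) ^ m) *
            ((1 - X) * (C (1 + X) - C X * X) ^ m))) =
      ∑ k ∈ Finset.Icc 1 (m + 1),
        Ideal.Quotient.mk (Ideal.span {(X : (ℤ[X])[X]) ^ (m + 1)})
          (C ((-1 : ℤ[X]) ^ (m + k + 1) * (1 + X) ^ m *
                (((2 * m - k).choose m : ℤ[X]) * X ^ (2 * m - k) +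
                  ((2 * m - k + 1).choose m : ℤ[X]) * X ^ (2 * m - k + 1))) *
            ((1 - X) * X ^ (m + 1 - k) * (C (1 + X) - C X * X) ^ (k - 1))) := by
  rw [← map_sum, Ideal.Quotient.mk_eq_mk_iff_sub_mem, Ideal.mem_span_singleton]
  have hE : (X : (ℤ[X])[X])^(m+1) ∣
      (C ((X : ℤ[X]) ^ m) *
          ((C (1 + X) - C X * X) ^ (2*m) - (C (1 + X) - C X * X) ^ (2*m) * X^1)
        - ∑ k ∈ Finset.Icc 1 (m + 1),
            C ((-1 : ℤ[X]) ^ (m + k + 1) * (1 + X) ^ m *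
                (((2 * m - k).choose m : ℤ[X]) * X ^ (2 * m - k) +
                  ((2 * m - k + 1).choose m : ℤ[X]) * X ^ (2 * m - k + 1))) *
              ((C (1 + X) - C X * X) ^ (k-1) * X ^ (m + 1 - k))) := by
    rw [Polynomial.X_pow_dvd_iff]
    intro d hd
    simp only [Polynomial.coeff_sub, Polynomial.coeff_C_mul, Polynomial.finset_sum_coeff,
      Polynomial.coeff_mul_X_pow', coeff_u_pow]
    rcases d with _ | n
    · rw [if_neg (by omega : ¬ (1:ℕ) ≤ 0)]
      have hz : ∀ x ∈ Finset.Icc 1 (m+1),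
          ((-1:ℤ[X])^(m+x+1) * (1+(X:ℤ[X]))^m *
            (((2*m-x).choose m : ℤ[X]) * (X:ℤ[X])^(2*m-x) + ((2*m-x+1).choose m : ℤ[X]) * (X:ℤ[X])^(2*m-x+1)) *
          if m+1-x ≤ 0 then ((x-1).choose (0-(m+1-x)) : ℤ[X]) * (1+(X:ℤ[X]))^(x-1-(0-(m+1-x))) * (-1:ℤ[X])^(0-(m+1-x)) * (X:ℤ[X])^(0-(m+1-x)) else 0)
          = if x = m+1 then (1+(X:ℤ[X]))^m * (X:ℤ[X])^m * (1+(X:ℤ[X]))^m else 0 := by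
        intro x hx
        simp only [Finset.mem_Icc] at hx
        by_cases hxe : x = m+1
        · subst hxe
          rw [if_pos rfl, if_pos (by omega)]
          rw [show m+1-(m+1) = 0 from by omega, show 2*m-(m+1)+1 = m from by omega,
            show 2*m-(m+1) = m-1 from by omega, show m+(m+1)+1 = 0+2*(m+1) from by omega, neg1pow]
          rw [Nat.choose_eq_zero_of_lt (show m-1 < m from by omega), Nat.choose_self]
          simp only [Nat.sub_zero, Nat.sub_self, Nat.add_sub_cancel, Nat.choose_zero_right]
          push_cast
          ring
        · rw [if_neg hxe, if_neg (by omega : ¬ m+1-x ≤ 0), mul_zero]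
      rw [Finset.sum_congr rfl hz, Finset.sum_ite_eq' (Finset.Icc 1 (m+1)) (m+1)]
      rw [if_pos (by simp)]
      rw [show 2*m = m + m from by omega]
      simp only [Nat.sub_zero, Nat.choose_zero_right, pow_zero, pow_add]
      push_cast
      ring
    · rw [if_pos (by omega : 1 ≤ n+1)]
      simp only [Nat.add_sub_cancel]
      have hn1 : n + 1 ≤ m := by omega
      have hsum : (∑ j ∈ Finset.range (m+1),
            (if j ≤ n+1 then
              (-1:ℤ[X])^j * (-1:ℤ[X])^(n+1-j) *
                ((1+(X:ℤ[X]))^(m+(m-(n+1))) *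
                  ((((m-1+j).choose m * (m-j).choose (n+1-j) : ℕ) : ℤ[X]) * (X:ℤ[X])^(m-1+j+(n+1-j))
                    + (((m-1+j+1).choose m * (m-j).choose (n+1-j) : ℕ) : ℤ[X]) * (X:ℤ[X])^(m-1+j+(n+1-j)+1)))
            else 0))
          = ∑ x ∈ Finset.Icc 1 (m+1),
              (-1:ℤ[X])^(m+x+1) * (1+(X:ℤ[X]))^m *
                ((((2*m-x).choose m : ℤ[X])) * (X:ℤ[X])^(2*m-x) + (((2*m-x+1).choose m : ℤ[X])) * (X:ℤ[X])^(2*m-x+1)) *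
              (if m+1-x ≤ n+1 then
                (((x-1).choose (n+1-(m+1-x)) : ℤ[X])) * (1+(X:ℤ[X]))^(x-1-(n+1-(m+1-x))) *
                  (-1:ℤ[X])^(n+1-(m+1-x)) * (X:ℤ[X])^(n+1-(m+1-x))
              else 0) := by
        refine Finset.sum_nbij' (i := fun j => m+1-j) (j := fun k => m+1-k) ?_ ?_ ?_ ?_ ?_
        · intro a ha; simp only [Finset.mem_range] at ha; simp only [Finset.mem_Icc]; omega
        · intro a ha; simp only [Finset.mem_Icc] at ha; simp only [Finset.mem_range]; omega
        · intro a ha; simp only [Finset.mem_range] at ha; show m+1-(m+1-a) = a; omega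
        · intro a ha; simp only [Finset.mem_Icc] at ha; show m+1-(m+1-a) = a; omega
        · intro j hj
          simp only [Finset.mem_range] at hj
          rw [show m+1-(m+1-j) = j from by omega]
          by_cases hc : j ≤ n+1
          · rw [if_pos hc, if_pos hc]
            rw [show m+1-j-1 = m-j from by omega,
              show 2*m-(m+1-j) = m-1+j from by omega,
              show m+(m+1-j)+1 = j+2*(m+1-j) from by omega, neg1pow,
              show m-j-(n+1-j) = m-(n+1) from by omega]
            push_cast
            ring
          · rw [if_neg hc, if_neg hc, mul_zero]
      rw [← hsum]
      have hres : (∑ j ∈ Finset.range (n+2),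
            (if j ≤ n+1 then
              (-1:ℤ[X])^j * (-1:ℤ[X])^(n+1-j) *
                ((1+(X:ℤ[X]))^(m+(m-(n+1))) *
                  ((((m-1+j).choose m * (m-j).choose (n+1-j) : ℕ) : ℤ[X]) * (X:ℤ[X])^(m-1+j+(n+1-j))
                    + (((m-1+j+1).choose m * (m-j).choose (n+1-j) : ℕ) : ℤ[X]) * (X:ℤ[X])^(m-1+j+(n+1-j)+1)))
            else 0))
          = ∑ j ∈ Finset.range (m+1),
            (if j ≤ n+1 then
              (-1:ℤ[X])^j * (-1:ℤ[X])^(n+1-j) *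
                ((1+(X:ℤ[X]))^(m+(m-(n+1))) *
                  ((((m-1+j).choose m * (m-j).choose (n+1-j) : ℕ) : ℤ[X]) * (X:ℤ[X])^(m-1+j+(n+1-j))
                    + (((m-1+j+1).choose m * (m-j).choose (n+1-j) : ℕ) : ℤ[X]) * (X:ℤ[X])^(m-1+j+(n+1-j)+1)))
            else 0) := by
        refine Finset.sum_subset ?_ ?_
        · intro x hx; simp only [Finset.mem_range] at hx ⊢; omega
        · intro x _ hnx
          simp only [Finset.mem_range] at hnx
          rw [if_neg (by omega)]
      rw [← hres]
      have hff : ∀ j ∈ Finset.range (n+2),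
          (if j ≤ n+1 then
              (-1:ℤ[X])^j * (-1:ℤ[X])^(n+1-j) *
                ((1+(X:ℤ[X]))^(m+(m-(n+1))) *
                  ((((m-1+j).choose m * (m-j).choose (n+1-j) : ℕ) : ℤ[X]) * (X:ℤ[X])^(m-1+j+(n+1-j))
                    + (((m-1+j+1).choose m * (m-j).choose (n+1-j) : ℕ) : ℤ[X]) * (X:ℤ[X])^(m-1+j+(n+1-j)+1)))
            else 0)
          = (-1:ℤ[X])^(n+1) *
              ((1+(X:ℤ[X]))^(m+(m-(n+1))) *
                ((((m-1+j).choose m * (m-j).choose (n+1-j) : ℕ) : ℤ[X]) * (X:ℤ[X])^(m+n)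
                  + (((m-1+j+1).choose m * (m-j).choose (n+1-j) : ℕ) : ℤ[X]) * (X:ℤ[X])^(m+n+1))) := by
        intro j hj
        simp only [Finset.mem_range] at hj
        rw [if_pos (by omega : j ≤ n+1), ← pow_add,
          show j+(n+1-j) = n+1 from by omega,
          show m-1+j+(n+1-j) = m+n from by omega]
      rw [Finset.sum_congr rfl hff, ← Finset.mul_sum, ← Finset.mul_sum,
        Finset.sum_add_distrib, ← Finset.sum_mul, ← Finset.sum_mul,
        ← Nat.cast_sum, ← Nat.cast_sum]
      have hBB : (∑ j ∈ Finset.range (n+2), (m-1+j).choose m * (m-j).choose (n+1-j))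
          = (2*m).choose n := by
        rw [Finset.sum_congr rfl (fun j _ => by rw [show m-1+j = m+j-1 from by omega])]
        exact lemB m n hm hn1
      have hAA : (∑ j ∈ Finset.range (n+2), (m-1+j+1).choose m * (m-j).choose (n+1-j))
          = (2*m+1).choose (n+1) := by
        rw [Finset.sum_congr rfl (fun j _ => by rw [show m-1+j+1 = m+j from by omega])]
        exact lemA' m n hn1
      rw [hBB, hAA,
        show 2*m-(n+1) = m+(m-(n+1)) from by omega,
        show 2*m-n = m+(m-(n+1))+1 from by omega,
        show (2*m+1).choose (n+1) = (2*m).choose n + (2*m).choose (n+1) from Nat.choose_succ_succ (2*m) n]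
      push_cast
      ring
  have hfac : (C ((X : ℤ[X]) ^ m) *
          (((1 - X) * (C (1 + X) - C X * X) ^ m) *
            ((1 - X) * (C (1 + X) - C X * X) ^ m)))
      - (∑ k ∈ Finset.Icc 1 (m + 1),
          C ((-1 : ℤ[X]) ^ (m + k + 1) * (1 + X) ^ m *
                (((2 * m - k).choose m : ℤ[X]) * X ^ (2 * m - k) +
                  ((2 * m - k + 1).choose m : ℤ[X]) * X ^ (2 * m - k + 1))) *
            ((1 - X) * X ^ (m + 1 - k) * (C (1 + X) - C X * X) ^ (k - 1)))
      = (1 - X) * (C ((X : ℤ[X]) ^ m) *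
          ((C (1 + X) - C X * X) ^ (2*m) - (C (1 + X) - C X * X) ^ (2*m) * X^1)
        - ∑ k ∈ Finset.Icc 1 (m + 1),
            C ((-1 : ℤ[X]) ^ (m + k + 1) * (1 + X) ^ m *
                (((2 * m - k).choose m : ℤ[X]) * X ^ (2 * m - k) +
                  ((2 * m - k + 1).choose m : ℤ[X]) * X ^ (2 * m - k + 1))) *
              ((C (1 + X) - C X * X) ^ (k-1) * X ^ (m + 1 - k))) := by
    have huu : (C (1 + X) - C X * X : (ℤ[X])[X]) ^ (2*m)
        = (C (1 + X) - C X * X) ^ m * (C (1 + X) - C X * X) ^ m := by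
      rw [← pow_add, two_mul]
    rw [mul_sub, Finset.mul_sum, huu]
    refine congrArg₂ HSub.hSub ?_ ?_
    · ring
    · exact Finset.sum_congr rfl fun k _ => by ring
  rw [hfac]
  exact hE.mul_left _
end

section
/- For all integers m ≥ 1 and 1 ≤ l ≤ m, one has Σ_{k=m−l+1}^{m+1} C(2m−k, m) · C(k−1, m−l) = C(2m, l−1), where C(p,q) denotes the binomial coefficient (with C(p,q) = 0 when q > p). -/
lemma aux_vandermonde (b : ℕ) : ∀ a n : ℕ,
    ∑ p ∈ Finset.range (n + 1), p.choose a * (n - p).choose b = (n + 1).choose (a + b + 1) := by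
  induction b with
  | zero =>
    intro a n
    simp only [Nat.choose_zero_right, mul_one, Nat.add_zero]
    rw [Finset.range_eq_Ico, ← Nat.sum_Icc_choose n a]
    symm
    apply Finset.sum_subset
    · intro x hx
      simp only [Finset.mem_Icc] at hx
      simp only [Finset.mem_Ico]
      omega
    · intro x hx hx2
      simp only [Finset.mem_Ico] at hx
      simp only [Finset.mem_Icc, not_and_or, not_le] at hx2
      exact Nat.choose_eq_zero_of_lt (by omega)
  | succ c ih =>
    intro a n
    induction n with
    | zero =>
      simp only [Finset.sum_range_one, Nat.choose_zero_succ, Nat.mul_zero, Nat.zero_sub]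
      rw [Nat.choose_eq_zero_of_lt (by omega)]
      simp
    | succ n ihn =>
      rw [Finset.sum_range_succ]
      have hlast : (n + 1).choose a * (n + 1 - (n + 1)).choose (c + 1) = 0 := by
        simp
      rw [hlast, add_zero]
      have hsplit : ∀ p ∈ Finset.range (n + 1),
          p.choose a * (n + 1 - p).choose (c + 1)
            = p.choose a * (n - p).choose c + p.choose a * (n - p).choose (c + 1) := by
        intro p hp
        simp only [Finset.mem_range] at hp
        have : n + 1 - p = (n - p) + 1 := by omega
        rw [this, Nat.choose_succ_succ, Nat.mul_add]
      rw [Finset.sum_congr rfl hsplit, Finset.sum_add_distrib, ih a n, ihn]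
      have : n + 1 + 1 = (n + 1) + 1 := rfl
      rw [this, Nat.choose_succ_succ (n + 1) (a + (c + 1))]
      have h1 : a + (c + 1) = a + c + 1 := by omega
      rw [h1]

/-- `∑_{k=m-l+1}^{m+1} C(2m-k, m) C(k-1, m-l) = C(2m, l-1)`. -/
theorem binomial_identity_one (m l : ℕ) (hm : 1 ≤ m) (hl1 : 1 ≤ l) (hl2 : l ≤ m) :
    ∑ k ∈ Finset.Icc (m - l + 1) (m + 1),
        (2 * m - k).choose m * (k - 1).choose (m - l) = (2 * m).choose (l - 1) := by
  have key := aux_vandermonde (m - l) m (2 * m - 1)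
  have h2m : 2 * m - 1 + 1 = 2 * m := by omega
  rw [h2m] at key
  -- shrink range sum to the nonzero part and reindex
  have hshrink : ∑ p ∈ Finset.range (2 * m), p.choose m * (2 * m - 1 - p).choose (m - l)
      = ∑ p ∈ Finset.Icc (m - 1) (m + l - 1), p.choose m * (2 * m - 1 - p).choose (m - l) := by
    symm
    apply Finset.sum_subset
    · intro x hx
      simp only [Finset.mem_Icc] at hx
      simp only [Finset.mem_range]
      omega
    · intro x hx hx2
      simp only [Finset.mem_range] at hx
      simp only [Finset.mem_Icc, not_and_or, not_le] at hx2
      rcases hx2 with h | h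
      · rw [Nat.choose_eq_zero_of_lt (by omega)]
        ring
      · have : (2 * m - 1 - x).choose (m - l) = 0 := Nat.choose_eq_zero_of_lt (by omega)
        rw [this]; ring
  have hbij : ∑ k ∈ Finset.Icc (m - l + 1) (m + 1),
        (2 * m - k).choose m * (k - 1).choose (m - l)
      = ∑ p ∈ Finset.Icc (m - 1) (m + l - 1), p.choose m * (2 * m - 1 - p).choose (m - l) := by
    apply Finset.sum_nbij' (i := fun k => 2 * m - k) (j := fun p => 2 * m - p)
    · intro k hk
      simp only [Finset.mem_Icc] at hk ⊢
      omega
    · intro p hp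
      simp only [Finset.mem_Icc] at hp ⊢
      omega
    · intro k hk
      simp only [Finset.mem_Icc] at hk
      omega
    · intro p hp
      simp only [Finset.mem_Icc] at hp
      omega
    · intro k hk
      simp only [Finset.mem_Icc] at hk
      congr 1
      congr 1
      omega
  rw [hbij, ← hshrink, key]
  have he : m + (m - l) + 1 = 2 * m - (l - 1) := by omega
  rw [he, Nat.choose_symm (by omega)]
end

section
/- For all integers m ≥ 2 and 2 ≤ l ≤ m, one has Σ_{k=m−l+1}^{m+1} C(2m−k, m) · C(k−1, m−l+1) = C(2m, l−2), where C(p,q) denotes the binomial coefficient (with C(p,q) = 0 when q > p). -/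
/-!
With `i = k - 1` and `j = 2m - k` we have `i + j = 2m - 1`, so the sum is the upper-index
Vandermonde sum `∑_{i+j=n} C(i, a) C(j, b) = C(n + 1, a + b + 1)` with `n = 2m - 1`,
`a = m - l + 1`, `b = m` (the terms outside the range of `k` vanish). Its value
`C(2m, 2m - l + 2)` is `C(2m, l - 2)` by symmetry.
-/

open Finset

/-- Choosing `a + b + 1` elements of `{0, …, n}` is choosing the `(a + 1)`-st of them, say `i`,
together with `a` elements below `i` and `b` above it. -/
theorem Nat.sum_antidiagonal_choose_mul_choose (a b n : ℕ) :
    ∑ p ∈ antidiagonal n, p.1.choose a * p.2.choose b = (n + 1).choose (a + b + 1) := by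
  induction n generalizing b with
  | zero => cases a <;> cases b <;> simp [Nat.choose_eq_zero_of_lt]
  | succ n ih =>
    rw [Nat.sum_antidiagonal_succ']
    cases b with
    | zero =>
      have ih₀ := ih 0
      simp only [Nat.choose_zero_right, mul_one, add_zero] at ih₀ ⊢
      rw [ih₀, ← Nat.choose_succ_succ']
    | succ c =>
      have pascal : ∀ p : ℕ × ℕ, p.1.choose a * (p.2 + 1).choose (c + 1)
          = p.1.choose a * p.2.choose c + p.1.choose a * p.2.choose (c + 1) := fun p ↦ by
        rw [Nat.choose_succ_succ', mul_add]
      simp only [pascal, sum_add_distrib, ih, Nat.choose_zero_succ, mul_zero, zero_add]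
      rw [← add_assoc a c 1, ← Nat.choose_succ_succ']

theorem binomial_identity_two_general (m l : ℕ) (hl1 : 2 ≤ l) (hl2 : l ≤ m) :
    ∑ k ∈ Finset.Icc (m - l + 1) (m + 1),
        (2 * m - k).choose m * (k - 1).choose (m - l + 1) = (2 * m).choose (l - 2) := by
  set a := m - l + 1
  obtain ⟨n, hn⟩ : ∃ n, 2 * m = n + 1 := ⟨2 * m - 1, by omega⟩
  have h_extend : ∑ k ∈ Icc a (m + 1), (2 * m - k).choose m * (k - 1).choose a
      = ∑ k ∈ range (n + 2), (2 * m - k).choose m * (k - 1).choose a := by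
    refine sum_subset (fun k hk ↦ by simp only [mem_Icc, mem_range] at hk ⊢; omega) ?_
    intro k _ hk
    simp only [mem_Icc, not_and_or, not_le] at hk
    rcases hk with hk | hk
    · rw [Nat.choose_eq_zero_of_lt (by omega : k - 1 < a), mul_zero]
    · rw [Nat.choose_eq_zero_of_lt (by omega : 2 * m - k < m), zero_mul]
  have h_shift : ∀ i ∈ range (n + 1), (2 * m - (i + 1)).choose m * (i + 1 - 1).choose a
      = i.choose a * (n - i).choose m := fun i _ ↦ by
    rw [hn, Nat.add_sub_add_right, Nat.add_sub_cancel, mul_comm]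
  rw [h_extend, sum_range_succ', Nat.choose_eq_zero_of_lt (by omega : 0 - 1 < a), mul_zero,
    add_zero, sum_congr rfl h_shift,
    ← Finset.Nat.sum_antidiagonal_eq_sum_range_succ (fun i j ↦ i.choose a * j.choose m),
    Nat.sum_antidiagonal_choose_mul_choose, ← hn, ← Nat.choose_symm (by omega)]
  congr 1
  omega

/-- `∑_{k=m-l+1}^{m+1} C(2m-k, m) C(k-1, m-l+1) = C(2m, l-2)`. -/
theorem binomial_identity_two (m l : ℕ) (hm : 2 ≤ m) (hl1 : 2 ≤ l) (hl2 : l ≤ m) :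
    ∑ k ∈ Finset.Icc (m - l + 1) (m + 1),
        (2 * m - k).choose m * (k - 1).choose (m - l + 1) = (2 * m).choose (l - 2) :=
  binomial_identity_two_general m l hl1 hl2
end

section
/- For all integers m ≥ 1 and 1 ≤ l ≤ m, one has Σ_{k=m−l+1}^{m+1} C(2m−k+1, m) · C(k−1, m−l+1) = C(2m+1, l−1), where C(p,q) denotes the binomial coefficient (with C(p,q) = 0 when q > p). -/
/-!
Comparing coefficients of `X ^ n` in
`(1 - X)⁻¹ ^ (a + 1) * (1 - X)⁻¹ ^ (b + 1) = (1 - X)⁻¹ ^ (a + b + 2)`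
gives the upper-index Vandermonde identity
`∑_{i ≤ n} C(a + i, a) C(b + n - i, b) = C(a + b + 1 + n, a + b + 1)`.
With `a = m - l + 1`, `b = m`, `n = l - 1` and `k = a + 1 + i` this is the claimed sum, once the
vanishing term `k = m - l + 1` is dropped.
-/

open Finset PowerSeries

theorem Nat.sum_range_add_choose_mul_add_choose (a b n : ℕ) :
    ∑ i ∈ range (n + 1), (a + i).choose a * (b + (n - i)).choose b
      = (a + b + 1 + n).choose (a + b + 1) := by
  have h := congrArg (fun f : ℤ⟦X⟧ˣ => coeff n f.val) (invOneSubPow_add ℤ (a + 1) (b + 1))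
  rw [show a + 1 + (b + 1) = a + b + 1 + 1 by ring] at h
  simp only [Units.val_mul, invOneSubPow_val_succ_eq_mk_add_choose, coeff_mul, coeff_mk,
    Nat.sum_antidiagonal_eq_sum_range_succ
      (fun i j => ((a + i).choose a : ℤ) * (b + j).choose b)] at h
  exact_mod_cast h.symm

theorem binomial_identity_four_general (m l : ℕ) (hl1 : 1 ≤ l) (hl2 : l ≤ m) :
    ∑ k ∈ Finset.Icc (m - l + 1) (m + 1),
        (2 * m - k + 1).choose m * (k - 1).choose (m - l + 1) = (2 * m + 1).choose (l - 1) := by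
  set a := m - l + 1
  obtain ⟨c, rfl⟩ : ∃ c, l = c + 1 := ⟨l - 1, by omega⟩
  have hm : m + 1 = a + c + 1 := by omega
  rw [hm, Icc_eq_cons_Ioc (by omega), sum_cons, ← Ico_add_one_add_one_eq_Ioc,
    sum_Ico_eq_sum_range, Nat.choose_eq_zero_of_lt (by omega : a - 1 < a), mul_zero, zero_add,
    show a + c + 1 + 1 - (a + 1) = c + 1 by omega]
  calc ∑ i ∈ range (c + 1), (2 * m - (a + 1 + i) + 1).choose m * (a + 1 + i - 1).choose a
      = ∑ i ∈ range (c + 1), (a + i).choose a * (m + (c - i)).choose m := by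
        refine sum_congr rfl fun i hi => ?_
        have hi : i < c + 1 := mem_range.1 hi
        rw [mul_comm, show 2 * m - (a + 1 + i) + 1 = m + (c - i) by omega,
          show a + 1 + i - 1 = a + i by omega]
    _ = (2 * m + 1).choose (a + m + 1) := by
        rw [Nat.sum_range_add_choose_mul_add_choose, show a + m + 1 + c = 2 * m + 1 by omega]
    _ = (2 * m + 1).choose (c + 1 - 1) :=
        Nat.choose_symm_of_eq_add (by omega)

/-- `∑_{k=m-l+1}^{m+1} C(2m-k+1, m) C(k-1, m-l+1) = C(2m+1, l-1)`. -/
theorem binomial_identity_four (m l : ℕ) (hm : 1 ≤ m) (hl1 : 1 ≤ l) (hl2 : l ≤ m) :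
    ∑ k ∈ Finset.Icc (m - l + 1) (m + 1),
        (2 * m - k + 1).choose m * (k - 1).choose (m - l + 1) = (2 * m + 1).choose (l - 1) :=
  binomial_identity_four_general m l hl1 hl2
end

section
/- Let A = ℤ[h][a,b]/(a² + ab, b²) and define ω₁ = ab, ω₂ = ab + ha, ω₃ = ab + hb, ω₄ = ab + ha + 2hb + h² in A. Then the following ten identities hold in A: ω₁² = 0; ω₁ω₂ = 0; ω₁ω₃ = 0; ω₁ω₄ = h²ω₁; ω₂² = −h²ω₁; ω₂ω₃ = h²ω₁; ω₂ω₄ = h²(ω₂ + ω₁); ω₃² = 0; ω₃ω₄ = h²(ω₃ + ω₁); ω₄² = h²(ω₄ + 2ω₃ + ω₂ + ω₁). -/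
open MvPolynomial

/-- `A = ℤ[h][a,b]/(a²+ab, b²)`: the cohomology ring of the Hirzebruch surface,
with variables `h = X 0`, `a = X 1`, `b = X 2`. -/
noncomputable def hirzebruchMk :
    MvPolynomial (Fin 3) ℤ →+*
      (MvPolynomial (Fin 3) ℤ ⧸
        Ideal.span {(X 1 : MvPolynomial (Fin 3) ℤ) ^ 2 + X 1 * X 2,
          (X 2 : MvPolynomial (Fin 3) ℤ) ^ 2}) :=
  Ideal.Quotient.mk _

set_option maxHeartbeats 2000000 in
/-- The multiplication table of the CSM classes of the cells of the Hirzebruch surface: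
with `ω₁ = ab`, `ω₂ = ab + ha`, `ω₃ = ab + hb`, `ω₄ = ab + ha + 2hb + h²` in
`A = ℤ[h][a,b]/(a²+ab, b²)`, the ten stated identities hold. -/
theorem hirzebruch_structure_constants
    (h a b ω₁ ω₂ ω₃ ω₄ :
      MvPolynomial (Fin 3) ℤ ⧸
        Ideal.span {(X 1 : MvPolynomial (Fin 3) ℤ) ^ 2 + X 1 * X 2,
          (X 2 : MvPolynomial (Fin 3) ℤ) ^ 2})
    (hh : h = hirzebruchMk (X 0)) (hab : a = hirzebruchMk (X 1)) (hb : b = hirzebruchMk (X 2))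
    (h1 : ω₁ = a * b) (h2 : ω₂ = a * b + h * a) (h3 : ω₃ = a * b + h * b)
    (h4 : ω₄ = a * b + h * a + 2 * h * b + h ^ 2) :
    ω₁ * ω₁ = 0 ∧
    ω₁ * ω₂ = 0 ∧
    ω₁ * ω₃ = 0 ∧
    ω₁ * ω₄ = h ^ 2 * ω₁ ∧
    ω₂ * ω₂ = -(h ^ 2) * ω₁ ∧
    ω₂ * ω₃ = h ^ 2 * ω₁ ∧
    ω₂ * ω₄ = h ^ 2 * (ω₂ + ω₁) ∧
    ω₃ * ω₃ = 0 ∧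
    ω₃ * ω₄ = h ^ 2 * (ω₃ + ω₁) ∧
    ω₄ * ω₄ = h ^ 2 * (ω₄ + 2 * ω₃ + ω₂ + ω₁) := by
  have e1 : a ^ 2 + a * b = 0 := by
    rw [hab, hb, ← map_pow, ← map_mul, ← map_add]
    exact Ideal.Quotient.eq_zero_iff_mem.mpr (Ideal.subset_span (by simp))
  have e2 : b ^ 2 = 0 := by
    rw [hb, ← map_pow]
    exact Ideal.Quotient.eq_zero_iff_mem.mpr (Ideal.subset_span (by simp))
  subst h1 h2 h3 h4
  refine ⟨?_, ?_, ?_, ?_, ?_, ?_, ?_, ?_, ?_, ?_⟩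
  · linear_combination a ^ 2 * e2
  · linear_combination (a ^ 2 - h * a) * e2 + h * b * e1
  · linear_combination (a ^ 2 + h * a) * e2
  · linear_combination (a ^ 2 + h * a) * e2 + h * b * e1
  · linear_combination (a ^ 2 - 2 * h * a) * e2 + (2 * h * b + h ^ 2) * e1
  · linear_combination a ^ 2 * e2 + h * b * e1
  · linear_combination a ^ 2 * e2 + (2 * h * b + h ^ 2) * e1
  · linear_combination (a ^ 2 + 2 * h * a + h ^ 2) * e2
  · linear_combination (a ^ 2 + 2 * h * a + 2 * h ^ 2) * e2 + h * b * e1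
  · linear_combination (a ^ 2 + 2 * h * a + 4 * h ^ 2) * e2 + (2 * h * b + h ^ 2) * e1
end

section
/- Let n ≥ 2 and 1 ≤ k < i ≤ j ≤ n be integers with i + j − k ≥ n, and let δ = 1 if i = j and δ = 0 otherwise. Define the polynomial p^k_{i,j}(z) ∈ ℤ[h][z] by p^k_{i,j}(z) = h²(z+h)^{i+j−k−3} + h^{2−δ} z^{i−k} (z+h)^{k−1+(j−i−1)(1−δ)} (z+2h)^{i−k−1} + Σ_{l=k+1}^{i−1} h³ z^{l−k} (z+h)^{i+j+k−2l−3} (z+2h)^{l−k−1}. Then the coefficient of z^{i+j−k−n} in p^k_{i,j}(z) equals C(i+j−k−2, n−2)·h^{n−1}, where C(p,q) denotes the binomial coefficient (with C(p,q) = 0 when q > p). -/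
/-!
Since `(z + h)^2 = z (z + 2h) + h^2`, the sum over `l` telescopes: the whole polynomial equals
`h (z + h)^(i+j-k-2)` when `i = j`, and that minus a multiple of `z^(i-k+1)` when `i < j`.
As `j ≤ n`, the exponent `i + j - k - n` lies below `i - k + 1`, so only `h (z + h)^(i+j-k-2)`
contributes, and its coefficient is read off from the binomial theorem.
-/

open Polynomial Finset

section Telescoping

variable {R : Type*} [CommRing R] (z h : R)

theorem weight_sum_telescope (a c : ℕ) :
    h ^ 2 * (z + h) ^ (c + 2 * a) + h * z ^ (a + 1) * (z + h) ^ c * (z + 2 * h) ^ a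
      + ∑ t ∈ range a, h ^ 3 * z ^ (t + 1) * (z + h) ^ (c + 2 * (a - 1 - t)) * (z + 2 * h) ^ t
    = h * (z + h) ^ (c + 2 * a + 1) := by
  induction a generalizing c with
  | zero => ring
  | succ a ih =>
    have hsum : ∑ t ∈ range a, h ^ 3 * z ^ (t + 1) * (z + h) ^ (c + 2 * (a + 1 - 1 - t))
          * (z + 2 * h) ^ t
        = ∑ t ∈ range a, h ^ 3 * z ^ (t + 1) * (z + h) ^ (c + 2 + 2 * (a - 1 - t))
          * (z + 2 * h) ^ t :=
      sum_congr rfl fun t ht => by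
        rw [show c + 2 * (a + 1 - 1 - t) = c + 2 + 2 * (a - 1 - t) by
          have := mem_range.mp ht; omega]
    rw [sum_range_succ, hsum, show a + 1 - 1 - a = 0 by omega]
    linear_combination ih (c + 2)

theorem weight_sum_eq {i j k : ℕ} (hk : 1 ≤ k) (hki : k < i) (hij : i ≤ j)
    (δ : ℕ) (hδ : δ = if i = j then 1 else 0) :
    h ^ 2 * (z + h) ^ (i + j - k - 3) +
        h ^ (2 - δ) * z ^ (i - k) * (z + h) ^ (k - 1 + (j - i - 1) * (1 - δ))
          * (z + 2 * h) ^ (i - k - 1) +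
        ∑ l ∈ Icc (k + 1) (i - 1),
          h ^ 3 * z ^ (l - k) * (z + h) ^ (i + j + k - 2 * l - 3) * (z + 2 * h) ^ (l - k - 1)
      = h * (z + h) ^ (i + j - k - 2) -
          if i = j then 0
          else z ^ (i - k + 1) * (h * (z + h) ^ (j - i + k - 2) * (z + 2 * h) ^ (i - k - 1)) := by
  obtain ⟨c, a, b, rfl, rfl, rfl⟩ : ∃ c a b, k = c + 1 ∧ i = c + a + 2 ∧ j = c + a + 2 + b :=
    ⟨k - 1, i - k - 1, j - i, by omega, by omega, by omega⟩
  have hsum : ∑ l ∈ Icc (c + 1 + 1) (c + a + 2 - 1), h ^ 3 * z ^ (l - (c + 1))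
        * (z + h) ^ (c + a + 2 + (c + a + 2 + b) + (c + 1) - 2 * l - 3)
        * (z + 2 * h) ^ (l - (c + 1) - 1)
      = ∑ t ∈ range a, h ^ 3 * z ^ (t + 1) * (z + h) ^ (c + b + 2 * (a - 1 - t))
        * (z + 2 * h) ^ t := by
    rw [show c + a + 2 - 1 = c + a + 1 by omega, ← Ico_add_one_right_eq_Icc,
      sum_Ico_eq_sum_range, show c + a + 1 + 1 - (c + 1 + 1) = a by omega]
    refine sum_congr rfl fun t ht => ?_
    have := mem_range.mp ht
    rw [show c + 1 + 1 + t - (c + 1) = t + 1 by omega, show t + 1 - 1 = t by omega,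
      show c + a + 2 + (c + a + 2 + b) + (c + 1) - 2 * (c + 1 + 1 + t) - 3
        = c + b + 2 * (a - 1 - t) by omega]
  rw [hsum, show c + a + 2 - (c + 1) = a + 1 by omega, show a + 1 - 1 = a by omega]
  rcases b with _ | b
  · subst hδ
    simp only [if_true, sub_zero, Nat.sub_self, Nat.add_one_sub_one, pow_one,
      Nat.zero_sub, mul_zero, add_zero,
      show c + a + 2 + (c + a + 2) - (c + 1) - 3 = c + 2 * a by omega,
      show c + 1 - 1 = c by omega,
      show c + a + 2 + (c + a + 2) - (c + 1) - 2 = c + 2 * a + 1 by omega]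
    exact weight_sum_telescope z h a c
  · rw [if_neg (by omega)] at hδ ⊢
    subst hδ
    rw [show c + a + 2 + (c + a + 2 + (b + 1)) - (c + 1) - 3 = c + b + 1 + 2 * a by omega,
      show c + 1 - 1 + (c + a + 2 + (b + 1) - (c + a + 2) - 1) * (1 - 0) = c + b by omega,
      show c + a + 2 + (c + a + 2 + (b + 1)) - (c + 1) - 2 = c + b + 1 + 2 * a + 1 by omega,
      show c + a + 2 + (b + 1) - (c + a + 2) + (c + 1) - 2 = c + b by omega,
      show c + b + 1 + 2 * a = c + (b + 1) + 2 * a by omega]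
    linear_combination weight_sum_telescope z h a (c + (b + 1))

end Telescoping

theorem coeff_C_mul_X_add_C_pow_sub {R : Type*} [CommRing R] (r : R) {m q : ℕ} (hq : q ≤ m) :
    (C r * (X + C r) ^ m).coeff (m - q) = m.choose q * r ^ (q + 1) := by
  rw [coeff_C_mul, coeff_X_add_C_pow, Nat.sub_sub_self hq, Nat.choose_symm hq]
  ring

theorem csm_proj_weight_polynomial_general (n i j k : ℕ)
    (hk : 1 ≤ k) (hki : k < i) (hij : i ≤ j) (hjn : j ≤ n) (hijk : n ≤ i + j - k)
    (δ : ℕ) (hδ : δ = if i = j then 1 else 0) :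
    (C ((X : ℤ[X]) ^ 2) * (X + C X) ^ (i + j - k - 3) +
        C ((X : ℤ[X]) ^ (2 - δ)) * X ^ (i - k) *
          (X + C X) ^ (k - 1 + (j - i - 1) * (1 - δ)) * (X + 2 * C X) ^ (i - k - 1) +
        ∑ l ∈ Finset.Icc (k + 1) (i - 1),
          C ((X : ℤ[X]) ^ 3) * X ^ (l - k) *
            (X + C X) ^ (i + j + k - 2 * l - 3) * (X + 2 * C X) ^ (l - k - 1)).coeff
        (i + j - k - n) =
      ((i + j - k - 2).choose (n - 2) : ℤ[X]) * X ^ (n - 1) := by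
  simp only [map_pow]
  rw [weight_sum_eq (X : ℤ[X][X]) (C X) hk hki hij δ hδ, coeff_sub]
  have hcorr : (if i = j then 0 else (X : ℤ[X][X]) ^ (i - k + 1) * (C X * (X + C X) ^ (j - i + k - 2)
      * (X + 2 * C X) ^ (i - k - 1))).coeff (i + j - k - n) = 0 := by
    split_ifs
    · exact coeff_zero _
    · rw [coeff_X_pow_mul', if_neg (by omega)]
  rw [hcorr, sub_zero, show i + j - k - n = i + j - k - 2 - (n - 2) by omega,
    coeff_C_mul_X_add_C_pow_sub _ (by omega), show n - 1 = n - 2 + 1 by omega]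

/-- The coefficient of `z^(i+j-k-n)` in the polynomial `p^k_{i,j}(z) ∈ ℤ[h][z]` coming
from residue calculus on weight functions equals the h-deformed Littlewood-Richardson
number `C(i+j-k-2, n-2) h^(n-1)` of `ℙ^(n-1) = Gr(1,n)`. Here the outer variable `X` of
`(ℤ[X])[X]` is `z` and `C X` is `h`, and `δ = 1` if `i = j`, `δ = 0` otherwise. -/
theorem csm_proj_weight_polynomial (n i j k : ℕ) (hn : 2 ≤ n)
    (hk : 1 ≤ k) (hki : k < i) (hij : i ≤ j) (hjn : j ≤ n) (hijk : n ≤ i + j - k)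
    (δ : ℕ) (hδ : δ = if i = j then 1 else 0) :
    (C ((X : ℤ[X]) ^ 2) * (X + C X) ^ (i + j - k - 3) +
        C ((X : ℤ[X]) ^ (2 - δ)) * X ^ (i - k) *
          (X + C X) ^ (k - 1 + (j - i - 1) * (1 - δ)) * (X + 2 * C X) ^ (i - k - 1) +
        ∑ l ∈ Finset.Icc (k + 1) (i - 1),
          C ((X : ℤ[X]) ^ 3) * X ^ (l - k) *
            (X + C X) ^ (i + j + k - 2 * l - 3) * (X + 2 * C X) ^ (l - k - 1)).coeff
        (i + j - k - n) =
      ((i + j - k - 2).choose (n - 2) : ℤ[X]) * X ^ (n - 1) :=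
  csm_proj_weight_polynomial_general n i j k hk hki hij hjn hijk δ hδ
end
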